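/- Let Σ = (X, 𝒟, φ) be a system and let A ⊆ X be nonempty, bounded and closed. The following statements are equivalent: (i) A is uniformly globally asymptotically stable; (ii) Σ is robustly forward complete and A is a uniformly globally attractive robustly invariant set; (iii) Σ is robustly forward complete and A is uniformly (locally) stable and uniformly globally weakly attractive; (iv) A is uniformly globally stable and uniformly globally weakly attractive; (v) A is uniformly globally stable and uniformly globally attractive. -/

import Mathlib

open scoped NNReal ENNReal
open Filter Topology Bornology

noncomputable section

/-- Functions of class 𝒦: continuous, strictly increasing, vanishing at zero. -/
def ClassK (γ : ℝ≥0 → ℝ≥0) : Prop :=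
  Continuous γ ∧ StrictMono γ ∧ γ 0 = 0

/-- Functions of class 𝒦∞: class 𝒦 and unbounded. -/
def ClassKinf (γ : ℝ≥0 → ℝ≥0) : Prop :=
  ClassK γ ∧ ∀ M : ℝ≥0, ∃ r : ℝ≥0, M < γ r

/-- Functions of class 𝒦ℒ. -/
def ClassKL (β : ℝ≥0 → ℝ≥0 → ℝ≥0) : Prop :=
  Continuous (fun p : ℝ≥0 × ℝ≥0 => β p.1 p.2) ∧
  (∀ t : ℝ≥0, ClassK fun r => β r t) ∧
  ∀ r : ℝ≥0, 0 < r →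
    StrictAnti (fun t => β r t) ∧ Tendsto (fun t => β r t) atTop (𝓝 0)

/-- Distance of a point to a set, `‖x‖_A`. -/
def dA {X : Type*} [NormedAddCommGroup X] (A : Set X) (x : X) : ℝ≥0 :=
  (Metric.infDist x A).toNNReal

/-- The open ε-neighborhood `B_ε(A)` of a set. -/
def ballSet {X : Type*} [NormedAddCommGroup X] (ε : ℝ≥0) (A : Set X) : Set X :=
  {x | dA A x < ε}

/-- A (time-invariant) control system with disturbances. -/
structure System (X : Type*) [NormedAddCommGroup X] [NormedSpace ℝ X]
    (W : Type*) [NormedAddCommGroup W] [NormedSpace ℝ W] where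
  /-- the set of disturbance values -/
  D : Set W
  D_nonempty : D.Nonempty
  /-- the space of disturbances -/
  Dist : Set (ℝ≥0 → W)
  dist_mem : ∀ d ∈ Dist, ∀ t : ℝ≥0, d t ∈ D
  /-- axiom of shift invariance -/
  shift_invariant : ∀ d ∈ Dist, ∀ τ : ℝ≥0, (fun t => d (t + τ)) ∈ Dist
  /-- axiom of concatenation -/
  concat_mem : ∀ d₁ ∈ Dist, ∀ d₂ ∈ Dist, ∀ t : ℝ≥0, 0 < t →
      (fun s => if s ≤ t then d₁ s else d₂ (s - t)) ∈ Dist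
  /-- the transition map -/
  φ : ℝ≥0 → X → (ℝ≥0 → W) → X
  identity : ∀ (x : X), ∀ d ∈ Dist, φ 0 x d = x
  causality : ∀ (t : ℝ≥0) (x : X), ∀ d ∈ Dist, ∀ d' ∈ Dist,
      (∀ s ≤ t, d s = d' s) → φ t x d = φ t x d'
  cont : ∀ (x : X), ∀ d ∈ Dist, Continuous fun t : ℝ≥0 => φ t x d
  cocycle : ∀ (t h : ℝ≥0) (x : X), ∀ d ∈ Dist,
      φ h (φ t x d) (fun s => d (t + s)) = φ (t + h) x d

namespace System

variable {X : Type*} [NormedAddCommGroup X] [NormedSpace ℝ X]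
variable {W : Type*} [NormedAddCommGroup W] [NormedSpace ℝ W]
variable (S : System X W)

/-- Reachability set within time `T`. -/
def RT (T : ℝ≥0) (B : Set X) : Set X :=
  {y | ∃ t ≤ T, ∃ d ∈ S.Dist, ∃ x ∈ B, y = S.φ t x d}

/-- Reachability set. -/
def R (B : Set X) : Set X :=
  {y | ∃ t : ℝ≥0, ∃ d ∈ S.Dist, ∃ x ∈ B, y = S.φ t x d}

/-- Robust forward completeness. -/
def RFC : Prop :=
  ∀ C : ℝ≥0, 0 < C → ∀ τ : ℝ≥0, 0 < τ →
    IsBounded (S.RT τ {x : X | ‖x‖₊ ≤ C})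

/-- Invariance of a set. -/
def Invariant (A : Set X) : Prop := S.R A ⊆ A

/-- Robust invariance of a set. -/
def RobustlyInvariant (A : Set X) : Prop :=
  S.Invariant A ∧
  ∀ ε : ℝ≥0, 0 < ε → ∀ h : ℝ≥0, 0 < h → ∃ δ : ℝ≥0, 0 < δ ∧
    ∀ t : ℝ≥0, t ≤ h → ∀ x : X, dA A x ≤ δ → ∀ d ∈ S.Dist, dA A (S.φ t x d) ≤ ε

/-- Lagrange stability of a set. -/
def LagrangeStable (A : Set X) : Prop :=
  ∃ σ : ℝ≥0 → ℝ≥0, ClassKinf σ ∧ ∃ c : ℝ≥0, 0 < c ∧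
    ∀ (x : X), ∀ d ∈ S.Dist, ∀ t : ℝ≥0, dA A (S.φ t x d) ≤ σ (dA A x) + c

/-- Uniform (local) stability of a set. -/
def ULS (A : Set X) : Prop :=
  ∀ ε : ℝ≥0, 0 < ε → ∃ δ : ℝ≥0, 0 < δ ∧
    ∀ x : X, dA A x ≤ δ → ∀ d ∈ S.Dist, ∀ t : ℝ≥0, dA A (S.φ t x d) ≤ ε

/-- Uniform global stability of a set. -/
def UGS (A : Set X) : Prop :=
  ∃ σ : ℝ≥0 → ℝ≥0, ClassKinf σ ∧
    ∀ (x : X), ∀ d ∈ S.Dist, ∀ t : ℝ≥0, dA A (S.φ t x d) ≤ σ (dA A x)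

/-- Uniform global asymptotic stability of a set. -/
def UGAS (A : Set X) : Prop :=
  ∃ β : ℝ≥0 → ℝ≥0 → ℝ≥0, ClassKL β ∧
    ∀ (x : X), ∀ d ∈ S.Dist, ∀ t : ℝ≥0, dA A (S.φ t x d) ≤ β (dA A x) t

/-- Practical uniform global asymptotic stability of a set. -/
def PUGASSet (A : Set X) : Prop :=
  ∃ β : ℝ≥0 → ℝ≥0 → ℝ≥0, ClassKL β ∧ ∃ c : ℝ≥0, 0 < c ∧
    ∀ (x : X), ∀ d ∈ S.Dist, ∀ t : ℝ≥0, dA A (S.φ t x d) ≤ β (dA A x) t + c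

/-- Global weak attractivity of a set. -/
def GWA (A : Set X) : Prop :=
  ∀ (x : X), ∀ d ∈ S.Dist, ∀ ε : ℝ≥0, 0 < ε → ∃ t : ℝ≥0, dA A (S.φ t x d) ≤ ε

/-- Uniform global weak attractivity of a set. -/
def UGWA (A : Set X) : Prop :=
  ∀ ε : ℝ≥0, 0 < ε → ∀ r : ℝ≥0, 0 < r → ∃ τ : ℝ≥0,
    ∀ x : X, dA A x ≤ r → ∀ d ∈ S.Dist, ∃ t ≤ τ, dA A (S.φ t x d) ≤ ε

/-- Uniform global attractivity of a set. -/
def UGATT (A : Set X) : Prop :=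
  ∀ ε : ℝ≥0, 0 < ε → ∀ r : ℝ≥0, 0 < r → ∃ τ : ℝ≥0,
    ∀ x : X, dA A x ≤ r → ∀ d ∈ S.Dist, ∀ t : ℝ≥0, τ ≤ t → dA A (S.φ t x d) ≤ ε

/-- Uniform ultimate boundedness of the system. -/
def UUB : Prop :=
  ∃ K : ℝ≥0, 0 < K ∧ ∀ r : ℝ≥0, 0 < r → ∃ T : ℝ≥0,
    ∀ x : X, ‖x‖₊ ≤ r → ∀ d ∈ S.Dist, ∀ t : ℝ≥0, T ≤ t → ‖S.φ t x d‖₊ ≤ K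

/-- Global recurrence of a set. -/
def GloballyRecurrent (A : Set X) : Prop :=
  ∀ (x : X), ∀ d ∈ S.Dist, ∃ t : ℝ≥0, S.φ t x d ∈ A

/-- Uniform global recurrence of a set. -/
def UniformlyGloballyRecurrent (A : Set X) : Prop :=
  ∀ R : ℝ≥0, 0 < R → ∃ τ : ℝ≥0,
    ∀ x : X, dA A x ≤ R → ∀ d ∈ S.Dist, ∃ t ≤ τ, S.φ t x d ∈ A

/-- The set `P₊(A) = ⋂_{ε>0} ℛ(B_ε(A))`. -/
def Pplus (A : Set X) : Set X := ⋂ (ε : ℝ≥0) (_ : 0 < ε), S.R (ballSet ε A)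

/-- Non-coercive Lyapunov function w.r.t. a bounded set `A`. -/
def NonCoerciveLyapunov (A : Set X) (V : X → ℝ) : Prop :=
  Continuous V ∧ (∀ x : X, 0 ≤ V x) ∧ (∀ x ∈ A, V x = 0) ∧
  (∃ ψ₂ : ℝ≥0 → ℝ≥0, ClassKinf ψ₂ ∧
    ∀ x ∉ A, 0 < V x ∧ V x ≤ (ψ₂ (dA A x) : ℝ)) ∧
  (∃ α : ℝ≥0 → ℝ≥0, ClassK α ∧ ∀ x ∉ A, ∀ d ∈ S.Dist,
    Filter.liminf (fun t : ℝ≥0 => (V (S.φ t x d) - V x) / (t : ℝ))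
      (𝓝[>] (0 : ℝ≥0)) ≤ -(α (dA A x) : ℝ))

/-- The system is Lagrange stable if some bounded nonempty set is Lagrange stable. -/
def SystemLagrangeStable : Prop :=
  ∃ A : Set X, A.Nonempty ∧ IsBounded A ∧ S.LagrangeStable A

/-- The system is pUGAS if some bounded nonempty set is pUGAS. -/
def SystemPUGAS : Prop :=
  ∃ A : Set X, A.Nonempty ∧ IsBounded A ∧ S.PUGASSet A

end System

/-!
The chain (i) ⇒ (ii) ⇒ (iii) ⇒ (iv) ⇒ (v) ⇒ (i) is closed by two majorant constructions.
For (iii) ⇒ (iv), robust forward completeness bounds trajectories up to the uniform time at which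
they come close to `A`, and local stability bounds them afterwards, so the worst-case deviation is
finite at every scale and small at small scales; it is then dominated by a 𝒦∞ function glued from
a dyadic series near `0` and a continuous interpolation of the bounds at integer scales.
For (v) ⇒ (i), uniform attractivity gives, at each integer scale, a continuous decreasing
majorant in time tending to `0`; interpolating over the scales gives `G r t`, and
`min (σ r) (G r t) + σ r e⁻ᵗ` is the required 𝒦ℒ bound.
-/

open Metric

section DistanceToSet

variable {X : Type*} [NormedAddCommGroup X] {A : Set X} {x a : X}

lemma coe_dA (A : Set X) (x : X) : (dA A x : ℝ) = infDist x A :=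
  Real.coe_toNNReal _ infDist_nonneg

lemma dA_eq_zero_of_mem (hx : x ∈ A) : dA A x = 0 := by
  simp [dA, infDist_zero_of_mem hx]

lemma mem_of_dA_eq_zero (hAc : IsClosed A) (hA : A.Nonempty) (h : dA A x = 0) : x ∈ A :=
  (hAc.mem_iff_infDist_zero hA).2 (by simpa [coe_dA] using congrArg NNReal.toReal h)

lemma dA_le_nnnorm_add (ha : a ∈ A) (x : X) : dA A x ≤ ‖x‖₊ + ‖a‖₊ := by
  rw [← NNReal.coe_le_coe, coe_dA]
  push_cast
  exact (infDist_le_dist_of_mem ha).trans (by rw [dist_eq_norm]; exact norm_sub_le x a)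

lemma isBounded_setOf_dA_le (hA : A.Nonempty) (hAb : IsBounded A) (R : ℝ≥0) :
    IsBounded {x | dA A x ≤ R} :=
  (hAb.thickening (δ := R + 1)).subset fun x hx => by
    have hx' : (dA A x : ℝ) ≤ R := hx
    rw [mem_thickening_iff_infDist_lt hA, ← coe_dA]
    linarith

end DistanceToSet

section ComparisonFunctions

lemma ClassK.exists_pos_le {γ : ℝ≥0 → ℝ≥0} (hγ : ClassK γ) {ε : ℝ≥0} (hε : 0 < ε) :
    ∃ δ : ℝ≥0, 0 < δ ∧ γ δ ≤ ε := by
  have hev : ∀ᶠ s in 𝓝 (0 : ℝ≥0), γ s < ε :=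
    (hγ.1.tendsto 0).eventually (gt_mem_nhds (by rwa [hγ.2.2]))
  obtain ⟨δ, hδ, hsub⟩ := NNReal.nhds_zero_basis.eventually_iff.mp hev
  exact ⟨δ / 2, by positivity, (hsub (Set.mem_Iio.mpr (NNReal.half_lt_self hδ.ne'))).le⟩

lemma ClassKL.monotone_left {β : ℝ≥0 → ℝ≥0 → ℝ≥0} (hβ : ClassKL β) (t : ℝ≥0) :
    Monotone (β · t) :=
  (hβ.2.1 t).2.1.monotone

lemma ClassKL.antitone_right {β : ℝ≥0 → ℝ≥0 → ℝ≥0} (hβ : ClassKL β) (r : ℝ≥0) :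
    Antitone (β r) := by
  rcases (zero_le (a := r)).eq_or_lt with rfl | hr
  · intro t t' _
    simp only [(hβ.2.1 t).2.2, (hβ.2.1 t').2.2, le_refl]
  · exact (hβ.2.2 r hr).1.antitone

lemma ClassKinf.of_real {F : ℝ≥0 → ℝ} (hc : Continuous F) (hm : StrictMono F) (h0 : F 0 = 0)
    (hge : ∀ r : ℝ≥0, (r : ℝ) ≤ F r) : ClassKinf fun r => (F r).toNNReal := by
  have hnn : ∀ r, 0 ≤ F r := fun r => h0 ▸ hm.monotone zero_le
  refine ⟨⟨continuous_real_toNNReal.comp hc, fun a b hab => ?_, by simp [h0]⟩, fun M => ⟨M + 1, ?_⟩⟩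
  · exact (Real.toNNReal_lt_toNNReal_iff_of_nonneg (hnn a)).2 (hm hab)
  · have h := (Real.toNNReal_lt_toNNReal_iff_of_nonneg M.coe_nonneg).2
      ((lt_add_one (M : ℝ)).trans_le (by exact_mod_cast hge (M + 1)))
    rwa [Real.toNNReal_coe] at h

lemma ClassKL.of_real {B : ℝ≥0 → ℝ≥0 → ℝ} (hc : Continuous fun p : ℝ≥0 × ℝ≥0 => B p.1 p.2)
    (hnn : ∀ r t, 0 ≤ B r t) (hmono : ∀ t, StrictMono (B · t)) (h0 : ∀ t, B 0 t = 0)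
    (hanti : ∀ r, 0 < r → StrictAnti (B r)) (htend : ∀ r, 0 < r → Tendsto (B r) atTop (𝓝 0)) :
    ClassKL fun r t => (B r t).toNNReal := by
  refine ⟨continuous_real_toNNReal.comp hc, fun t => ⟨?_, fun a b hab => ?_, by simp [h0 t]⟩,
    fun r hr => ⟨fun a b hab => ?_, ?_⟩⟩
  · exact continuous_real_toNNReal.comp (hc.comp (continuous_id.prodMk continuous_const))
  · exact (Real.toNNReal_lt_toNNReal_iff_of_nonneg (hnn a t)).2 (hmono t hab)
  · exact (Real.toNNReal_lt_toNNReal_iff_of_nonneg (hnn r b)).2 (hanti r hr hab)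
  · simpa [Function.comp_def] using (continuous_real_toNNReal.tendsto 0).comp (htend r hr)

end ComparisonFunctions

section Interpolation

def clamp01 (x : ℝ) : ℝ := min 1 (max 0 x)

lemma clamp01_nonneg (x : ℝ) : 0 ≤ clamp01 x := le_min zero_le_one (le_max_left _ _)

lemma clamp01_le_one (x : ℝ) : clamp01 x ≤ 1 := min_le_left _ _

lemma clamp01_mono : Monotone clamp01 :=
  fun _ _ h => min_le_min le_rfl (max_le_max le_rfl h)

lemma continuous_clamp01 : Continuous clamp01 :=
  continuous_const.min (continuous_const.max continuous_id)

lemma clamp01_of_one_le {x : ℝ} (h : 1 ≤ x) : clamp01 x = 1 :=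
  min_eq_left (le_max_of_le_right h)

lemma clamp01_of_nonpos {x : ℝ} (h : x ≤ 0) : clamp01 x = 0 := by
  rw [clamp01, max_eq_left h, min_eq_right zero_le_one]

def dyadicSum {α : Type*} (u : ℕ → α → ℝ) (a : α) : ℝ :=
  ∑' n, (2 : ℝ)⁻¹ ^ n * clamp01 (u n a)

section DyadicSum

variable {α : Type*} {u : ℕ → α → ℝ}

lemma norm_pow_mul_clamp01_le (n : ℕ) (x : ℝ) : ‖(2 : ℝ)⁻¹ ^ n * clamp01 x‖ ≤ (2 : ℝ)⁻¹ ^ n := by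
  rw [Real.norm_of_nonneg (mul_nonneg (by positivity) (clamp01_nonneg x))]
  exact mul_le_of_le_one_right (by positivity) (clamp01_le_one x)

lemma summable_geometric_two_inv : Summable fun n : ℕ => (2 : ℝ)⁻¹ ^ n :=
  summable_geometric_of_lt_one (by norm_num) (by norm_num)

lemma summable_dyadicSum (u : ℕ → α → ℝ) (a : α) :
    Summable fun n => (2 : ℝ)⁻¹ ^ n * clamp01 (u n a) :=
  summable_geometric_two_inv.of_norm_bounded fun n => norm_pow_mul_clamp01_le n _

lemma dyadicSum_nonneg (a : α) : 0 ≤ dyadicSum u a :=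
  tsum_nonneg fun _ => mul_nonneg (by positivity) (clamp01_nonneg _)

lemma dyadicSum_le_dyadicSum {a b : α} (h : ∀ n, u n a ≤ u n b) :
    dyadicSum u a ≤ dyadicSum u b :=
  (summable_dyadicSum u a).tsum_le_tsum
    (fun n => mul_le_mul_of_nonneg_left (clamp01_mono (h n)) (by positivity))
    (summable_dyadicSum u b)

lemma pow_le_dyadicSum {a : α} {n : ℕ} (h : 1 ≤ u n a) : (2 : ℝ)⁻¹ ^ n ≤ dyadicSum u a := by
  simpa [dyadicSum, clamp01_of_one_le h] using (summable_dyadicSum u a).le_tsum n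
    fun _ _ => mul_nonneg (by positivity) (clamp01_nonneg _)

lemma dyadicSum_eq_zero {a : α} (h : ∀ n, u n a ≤ 0) : dyadicSum u a = 0 := by
  simp [dyadicSum, clamp01_of_nonpos (h _)]

lemma continuous_dyadicSum [TopologicalSpace α] (hu : ∀ n, Continuous (u n)) :
    Continuous (dyadicSum u) :=
  continuous_tsum (fun n => continuous_const.mul (continuous_clamp01.comp (hu n)))
    summable_geometric_two_inv fun n _ => norm_pow_mul_clamp01_le n _

lemma tendsto_dyadicSum {l : Filter α} (hu : ∀ n, ∀ᶠ a in l, u n a ≤ 0) :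
    Tendsto (dyadicSum u) l (𝓝 0) := by
  have h : Tendsto (dyadicSum u) l (𝓝 (∑' _ : ℕ, (0 : ℝ))) :=
    tendsto_tsum_of_dominated_convergence summable_geometric_two_inv
    (fun n => tendsto_const_nhds.congr' <| (hu n).mono fun a ha => by
      simp [clamp01_of_nonpos ha])
    (Eventually.of_forall fun a n => norm_pow_mul_clamp01_le n (u n a))
  rwa [tsum_zero] at h

end DyadicSum

/-- If `P` never fails then `y ≤ 0`; otherwise `S` only has to dominate `y` at the first failure. -/
lemma le_of_pow_half_thresholds {y S : ℝ} (hS : 0 ≤ S) (P : ℕ → Prop)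
    (hP : ∀ n, P n → y ≤ (2 : ℝ)⁻¹ ^ n) (h0 : ¬P 0 → y ≤ S)
    (hsucc : ∀ n, P n → ¬P (n + 1) → y ≤ S) : y ≤ S := by
  by_contra hy
  have hall : ∀ n, P n := by
    intro n
    induction n with
    | zero => exact not_not.1 (mt h0 hy)
    | succ n ih => exact not_not.1 (mt (hsucc n ih) hy)
  have hy0 : y ≤ 0 := ge_of_tendsto'
    (tendsto_pow_atTop_nhds_zero_of_lt_one (by norm_num) (by norm_num)) fun n => hP n (hall n)
  exact hy (hy0.trans hS)

/-- A continuous interpolation of the step function `r ↦ c ⌊r⌋₊`: the `m`-th weight rises from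
`0` to `1` on `[m - 1, m]`, so only the indices `m ≤ ⌊r⌋₊ + 1` contribute. -/
def ladder (c : ℕ → ℝ) (r : ℝ≥0) : ℝ :=
  ∑ m ∈ Finset.range (⌊r⌋₊ + 2), clamp01 (r - m + 1) * c m

section Ladder

variable {c c' : ℕ → ℝ} {r : ℝ≥0}

lemma ladder_eq_sum_range {N : ℕ} (hN : ⌊r⌋₊ + 2 ≤ N) :
    ladder c r = ∑ m ∈ Finset.range N, clamp01 (r - m + 1) * c m := by
  refine Finset.sum_subset (Finset.range_subset_range.2 hN) fun m _ hm => ?_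
  have hm' : (⌊r⌋₊ : ℝ) + 2 ≤ m := by exact_mod_cast not_lt.1 (Finset.mem_range.not.1 hm)
  have hr : (r : ℝ) < ⌊r⌋₊ + 1 := by exact_mod_cast Nat.lt_floor_add_one r
  rw [clamp01_of_nonpos (by linarith), zero_mul]

lemma Continuous.ladder {β : Type*} [TopologicalSpace β] {f : β → ℝ≥0} {v : ℕ → β → ℝ}
    (hf : Continuous f) (hv : ∀ m, Continuous (v m)) :
    Continuous fun b => ladder (fun m => v m b) (f b) := by
  refine continuous_iff_continuousAt.2 fun b₀ => ?_
  have hsum : Continuous fun b => ∑ m ∈ Finset.range (⌊f b₀⌋₊ + 3),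
      clamp01 (f b - m + 1) * v m b :=
    continuous_finsetSum _ fun m _ =>
      (continuous_clamp01.comp ((NNReal.continuous_coe.comp hf).sub continuous_const
        |>.add continuous_const)).mul (hv m)
  have hnear : ∀ᶠ b in 𝓝 b₀, f b < ⌊f b₀⌋₊ + 1 :=
    hf.continuousAt.eventually_lt continuousAt_const (by exact_mod_cast Nat.lt_floor_add_one _)
  refine hsum.continuousAt.congr (hnear.mono fun b hb => (ladder_eq_sum_range ?_).symm)
  have : ⌊f b⌋₊ < ⌊f b₀⌋₊ + 1 := Nat.floor_lt' (by omega) |>.2 (by exact_mod_cast hb)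
  omega

lemma ladder_nonneg (hc : ∀ m, 0 ≤ c m) : 0 ≤ ladder c r :=
  Finset.sum_nonneg fun m _ => mul_nonneg (clamp01_nonneg _) (hc m)

lemma ladder_le_ladder (h : ∀ m, c m ≤ c' m) : ladder c r ≤ ladder c' r :=
  Finset.sum_le_sum fun m _ => mul_le_mul_of_nonneg_left (h m) (clamp01_nonneg _)

lemma monotone_ladder (hc : ∀ m, 0 ≤ c m) : Monotone (ladder c) := by
  intro r r' h
  rw [ladder_eq_sum_range (N := ⌊r'⌋₊ + 2) (by have := Nat.floor_mono h; omega)]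
  refine Finset.sum_le_sum fun m _ => mul_le_mul_of_nonneg_right (clamp01_mono ?_) (hc m)
  have : (r : ℝ) ≤ r' := h
  linarith

lemma le_ladder (hc : ∀ m, 0 ≤ c m) (r : ℝ≥0) : c ⌊r⌋₊ ≤ ladder c r := by
  have hfl : ((⌊r⌋₊ : ℕ) : ℝ) ≤ r := by exact_mod_cast Nat.floor_le (zero_le (a := r))
  have h := Finset.single_le_sum (f := fun m : ℕ => clamp01 (r - m + 1) * c m)
    (fun m _ => mul_nonneg (clamp01_nonneg _) (hc m))
    (Finset.mem_range.2 (by omega : ⌊r⌋₊ < ⌊r⌋₊ + 2))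
  rwa [clamp01_of_one_le (by linarith), one_mul] at h

lemma tendsto_ladder {β : Type*} {l : Filter β} {v : ℕ → β → ℝ}
    (hv : ∀ m, Tendsto (v m) l (𝓝 (c m))) (r : ℝ≥0) : Tendsto (fun b => ladder (fun m => v m b) r) l (𝓝 (ladder c r)) :=
  tendsto_finsetSum _ fun m _ => (hv m).const_mul _

end Ladder

end Interpolation

section Majorants

/-- Intended for `δ k` a scale below which a deviation is at most `2⁻ᵏ` and `C m` a bound for it
at scale `m + 1`: the dyadic sum dominates it near `0`, the ladder away from `0`. -/
def growthGauge (δ C : ℕ → ℝ≥0) (s : ℝ≥0) : ℝ :=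
  s + (dyadicSum (fun k (s : ℝ≥0) => s / δ (k + 1)) s + clamp01 (s / δ 0) * ladder (C ·) s)

section GrowthGauge

variable (δ C : ℕ → ℝ≥0)

lemma le_growthGauge (s : ℝ≥0) : (s : ℝ) ≤ growthGauge δ C s :=
  le_add_of_nonneg_right <| add_nonneg (dyadicSum_nonneg s)
    (mul_nonneg (clamp01_nonneg _) (ladder_nonneg fun m => (C m).coe_nonneg))

lemma classKinf_growthGauge : ClassKinf fun s => (growthGauge δ C s).toNNReal := by
  refine .of_real ?_ (fun a b hab => ?_) ?_ (le_growthGauge δ C)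
  · exact NNReal.continuous_coe.add
      ((continuous_dyadicSum fun k => NNReal.continuous_coe.div_const _).add
        ((continuous_clamp01.comp (NNReal.continuous_coe.div_const _)).mul
          (continuous_id.ladder fun m => continuous_const)))
  · have h1 : (a : ℝ) < b := hab
    have h2 := dyadicSum_le_dyadicSum (u := fun k (s : ℝ≥0) => s / δ (k + 1)) (a := a) (b := b)
      fun k => by gcongr
    have h3 := mul_le_mul (clamp01_mono (by gcongr : (a : ℝ) / δ 0 ≤ b / δ 0))
      (monotone_ladder (fun m => (C m).coe_nonneg) hab.le)
      (ladder_nonneg fun m => (C m).coe_nonneg) (clamp01_nonneg _)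
    simp only [growthGauge]
    linarith
  · simp [growthGauge, dyadicSum_eq_zero, clamp01_of_nonpos]

end GrowthGauge

theorem exists_classKinf_majorant {ι : Type*} (r y : ι → ℝ≥0)
    (hsmall : ∀ ε : ℝ≥0, 0 < ε → ∃ δ : ℝ≥0, 0 < δ ∧ ∀ i, r i ≤ δ → y i ≤ ε)
    (hbdd : ∀ R : ℝ≥0, ∃ C : ℝ≥0, ∀ i, r i ≤ R → y i ≤ C) :
    ∃ σ : ℝ≥0 → ℝ≥0, ClassKinf σ ∧ ∀ i, y i ≤ σ (r i) := by
  choose δ hδ hδy using fun k : ℕ => hsmall ((2 : ℝ≥0)⁻¹ ^ k) (by positivity)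
  choose C hCy using fun m : ℕ => hbdd (m + 1)
  refine ⟨_, classKinf_growthGauge δ C, fun i => ?_⟩
  have hF := (r i).coe_nonneg.trans (le_growthGauge δ C (r i))
  rw [Real.le_toNNReal_iff_coe_le hF]
  have hsum := dyadicSum_nonneg (u := fun k (s : ℝ≥0) => s / δ (k + 1)) (r i)
  have hlad := ladder_nonneg (r := r i) fun m => (C m).coe_nonneg
  refine le_of_pow_half_thresholds hF (fun k => r i < δ k)
    (fun k hk => by exact_mod_cast hδy k i hk.le) (fun h0 => ?_) (fun k hk hk1 => ?_)
  · have hcut : clamp01 (r i / δ 0) = 1 :=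
      clamp01_of_one_le ((one_le_div (by exact_mod_cast hδ 0)).2 (by exact_mod_cast not_lt.1 h0))
    have hC : (y i : ℝ) ≤ C ⌊r i⌋₊ := by exact_mod_cast hCy _ i (Nat.lt_floor_add_one _).le
    have := le_ladder (fun m => (C m).coe_nonneg) (r i)
    simp only [growthGauge, hcut, one_mul]
    linarith [(r i).coe_nonneg]
  · have hy : (y i : ℝ) ≤ (2 : ℝ)⁻¹ ^ k := by exact_mod_cast hδy k i hk.le
    have hk := pow_le_dyadicSum (u := fun k (s : ℝ≥0) => s / δ (k + 1)) (a := r i) (n := k)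
      ((one_le_div (by exact_mod_cast hδ (k + 1))).2 (by exact_mod_cast not_lt.1 hk1))
    have := mul_nonneg (clamp01_nonneg (r i / δ 0)) hlad
    simp only [growthGauge]
    linarith [(r i).coe_nonneg]

/-- Intended for `T n` a time after which a deviation is at most `2⁻ⁿ` and `B` a global bound
for it; `clamp01 (T + 1 - s)` is `1` up to time `T` and `0` from time `T + 1` on. -/
def decayGauge (B : ℝ≥0) (T : ℕ → ℝ≥0) (s : ℝ≥0) : ℝ :=
  B * clamp01 (T 0 + 1 - s) + dyadicSum (fun n (s : ℝ≥0) => T (n + 1) + 1 - s) s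

section DecayGauge

variable (B : ℝ≥0) (T : ℕ → ℝ≥0)

lemma decayGauge_nonneg (s : ℝ≥0) : 0 ≤ decayGauge B T s :=
  add_nonneg (mul_nonneg B.coe_nonneg (clamp01_nonneg _)) (dyadicSum_nonneg s)

lemma continuous_decayGauge : Continuous (decayGauge B T) :=
  (continuous_const.mul (continuous_clamp01.comp (continuous_const.sub NNReal.continuous_coe))).add
    (continuous_dyadicSum fun _ => continuous_const.sub NNReal.continuous_coe)

lemma antitone_decayGauge : Antitone (decayGauge B T) := fun a b hab => by
  have hab' : (a : ℝ) ≤ b := hab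
  exact add_le_add (mul_le_mul_of_nonneg_left (clamp01_mono (by linarith)) B.coe_nonneg)
    (dyadicSum_le_dyadicSum fun n => by linarith)

lemma tendsto_decayGauge : Tendsto (decayGauge B T) atTop (𝓝 0) := by
  have hcut : ∀ T' : ℝ≥0, ∀ᶠ s : ℝ≥0 in atTop, (T' : ℝ) + 1 - s ≤ 0 := fun T' =>
    (eventually_ge_atTop (T' + 1)).mono fun s hs => by
      have : ((T' + 1 : ℝ≥0) : ℝ) ≤ s := hs
      push_cast at this
      linarith
  have h1 : Tendsto (fun s : ℝ≥0 => (B : ℝ) * clamp01 (T 0 + 1 - s)) atTop (𝓝 0) :=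
    tendsto_const_nhds.congr' <| (hcut (T 0)).mono fun s hs => by simp [clamp01_of_nonpos hs]
  have h := h1.add (tendsto_dyadicSum fun n => hcut (T (n + 1)))
  rwa [add_zero] at h

end DecayGauge

theorem exists_antitone_majorant {ι : Type*} (t y : ι → ℝ≥0) (B : ℝ≥0) (hB : ∀ i, y i ≤ B)
    (hdecay : ∀ ε : ℝ≥0, 0 < ε → ∃ T : ℝ≥0, ∀ i, T ≤ t i → y i ≤ ε) :
    ∃ g : ℝ≥0 → ℝ, Continuous g ∧ Antitone g ∧ Tendsto g atTop (𝓝 0) ∧ (∀ s, 0 ≤ g s) ∧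
      ∀ i, (y i : ℝ) ≤ g (t i) := by
  choose T hTy using fun n : ℕ => hdecay ((2 : ℝ≥0)⁻¹ ^ n) (by positivity)
  refine ⟨decayGauge B T, continuous_decayGauge B T, antitone_decayGauge B T,
    tendsto_decayGauge B T, decayGauge_nonneg B T, fun i => ?_⟩
  have hsum := dyadicSum_nonneg (u := fun n (s : ℝ≥0) => (T (n + 1) : ℝ) + 1 - s) (t i)
  have hcut := mul_nonneg B.coe_nonneg (clamp01_nonneg (T 0 + 1 - t i))
  refine le_of_pow_half_thresholds (decayGauge_nonneg B T _) (fun n => T n ≤ t i)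
    (fun n hn => by exact_mod_cast hTy n i hn) (fun h0 => ?_) (fun n hn hn1 => ?_)
  · have h1 : clamp01 (T 0 + 1 - t i) = 1 := by
      have : (t i : ℝ) < T 0 := by exact_mod_cast not_le.1 h0
      exact clamp01_of_one_le (by linarith)
    simp only [decayGauge, h1, mul_one]
    linarith [show (y i : ℝ) ≤ B from hB i]
  · have hy : (y i : ℝ) ≤ (2 : ℝ)⁻¹ ^ n := by exact_mod_cast hTy n i hn
    have hn := pow_le_dyadicSum (u := fun n (s : ℝ≥0) => (T (n + 1) : ℝ) + 1 - s)
      (a := t i) (n := n) (by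
        have : (t i : ℝ) < T (n + 1) := by exact_mod_cast not_le.1 hn1
        linarith)
    simp only [decayGauge]
    linarith

lemma classKL_min_add_mul_exp {σ : ℝ≥0 → ℝ≥0} (hσ : ClassK σ) {G : ℝ≥0 → ℝ≥0 → ℝ}
    (hGc : Continuous fun p : ℝ≥0 × ℝ≥0 => G p.1 p.2) (hG0 : ∀ r t, 0 ≤ G r t)
    (hGmono : ∀ t, Monotone (G · t)) (hGanti : ∀ r, Antitone (G r))
    (hGt : ∀ r, Tendsto (G r) atTop (𝓝 0)) :
    ClassKL fun r t => (min (σ r : ℝ) (G r t) + σ r * Real.exp (-t)).toNNReal := by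
  have hσc : Continuous fun r => (σ r : ℝ) := NNReal.continuous_coe.comp hσ.1
  have hσm : StrictMono fun r => (σ r : ℝ) := fun a b hab => by exact_mod_cast hσ.2.1 hab
  have hexp : Continuous fun t : ℝ≥0 => Real.exp (-t) :=
    Real.continuous_exp.comp NNReal.continuous_coe.neg
  refine .of_real ?_ (fun r t => ?_) (fun t a b hab => ?_) (fun t => ?_) (fun r hr a b hab => ?_)
    (fun r hr => ?_)
  · exact ((hσc.comp continuous_fst).min hGc).add
      ((hσc.comp continuous_fst).mul (hexp.comp continuous_snd))
  · have := (σ r).coe_nonneg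
    have := hG0 r t
    positivity
  · exact add_lt_add_of_le_of_lt (min_le_min (hσm hab).le (hGmono t hab.le))
      (mul_lt_mul_of_pos_right (hσm hab) (Real.exp_pos _))
  · simp [hσ.2.2, hG0]
  · have hσr : (0 : ℝ) < σ r := by
      have := hσ.2.1 hr
      rw [hσ.2.2] at this
      exact_mod_cast this
    have hab' : (a : ℝ) < b := hab
    exact add_lt_add_of_le_of_lt (min_le_min le_rfl (hGanti r hab.le))
      (mul_lt_mul_of_pos_left (Real.exp_lt_exp.2 (by linarith)) hσr)
  · have hexp0 : Tendsto (fun t : ℝ≥0 => Real.exp (-t)) atTop (𝓝 0) :=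
      Real.tendsto_exp_neg_atTop_nhds_zero.comp (NNReal.tendsto_coe_atTop.2 tendsto_id)
    simpa [min_eq_right (σ r).coe_nonneg] using
      ((tendsto_const_nhds (x := (σ r : ℝ))).min (hGt r)).add (hexp0.const_mul (σ r : ℝ))

theorem exists_classKL_majorant {ι : Type*} (r t y : ι → ℝ≥0) {σ : ℝ≥0 → ℝ≥0} (hσ : ClassK σ)
    (hy : ∀ i, y i ≤ σ (r i))
    (hatt : ∀ ε : ℝ≥0, 0 < ε → ∀ R : ℝ≥0, 0 < R → ∃ τ : ℝ≥0, ∀ i, r i ≤ R → τ ≤ t i → y i ≤ ε) :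
    ∃ β : ℝ≥0 → ℝ≥0 → ℝ≥0, ClassKL β ∧ ∀ i, y i ≤ β (r i) (t i) := by
  have hlevel : ∀ m : ℕ, ∃ g : ℝ≥0 → ℝ, Continuous g ∧ Antitone g ∧ Tendsto g atTop (𝓝 0) ∧
      (∀ s, 0 ≤ g s) ∧ ∀ i, r i ≤ m + 1 → (y i : ℝ) ≤ g (t i) := by
    intro m
    obtain ⟨g, hgc, hga, hgt, hg0, hgy⟩ := exists_antitone_majorant
      (fun i : {i // r i ≤ m + 1} => t i) (fun i => y i) (σ (m + 1))
      (fun i => (hy i).trans (hσ.2.1.monotone i.2)) fun ε hε => by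
        obtain ⟨τ, hτ⟩ := hatt ε hε (m + 1) (by positivity)
        exact ⟨τ, fun i hi => hτ i i.2 hi⟩
    exact ⟨g, hgc, hga, hgt, hg0, fun i hi => hgy ⟨i, hi⟩⟩
  choose g hgc hga hgt hg0 hgy using hlevel
  set G : ℝ≥0 → ℝ≥0 → ℝ := fun r t => ladder (g · t) r
  refine ⟨_, classKL_min_add_mul_exp hσ (G := G)
    (continuous_fst.ladder fun m => (hgc m).comp continuous_snd)
    (fun r t => ladder_nonneg fun m => hg0 m t) (fun t => monotone_ladder fun m => hg0 m t)
    (fun r a b hab => ladder_le_ladder fun m => hga m hab)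
    (fun r => by
      have h := tendsto_ladder (c := 0) hgt r
      rwa [show ladder 0 r = 0 by simp [ladder]] at h), fun i => ?_⟩
  have hσy : (y i : ℝ) ≤ σ (r i) := hy i
  have hGy : (y i : ℝ) ≤ G (r i) (t i) :=
    (hgy _ i (Nat.lt_floor_add_one _).le).trans (le_ladder (fun m => hg0 m _) (r i))
  have := mul_nonneg (σ (r i)).coe_nonneg (Real.exp_pos (-(t i : ℝ))).le
  have hyβ := (le_min hσy hGy).trans (le_add_of_nonneg_right this)
  exact (Real.le_toNNReal_iff_coe_le ((y i).coe_nonneg.trans hyβ)).2 hyβ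

end Majorants

namespace System

variable {X : Type*} [NormedAddCommGroup X] [NormedSpace ℝ X]
variable {W : Type*} [NormedAddCommGroup W] [NormedSpace ℝ W]

lemma φ_eq_φ_shift (S : System X W) (x : X) {d : ℝ≥0 → W} (hd : d ∈ S.Dist) {s t : ℝ≥0}
    (hst : s ≤ t) : S.φ t x d = S.φ (t - s) (S.φ s x d) (fun u => d (u + s)) := by
  simpa [add_tsub_cancel_of_le hst, add_comm] using (S.cocycle s (t - s) x d hd).symm

variable {S : System X W} {A : Set X}

lemma UGAS.rfc (hA : A.Nonempty) (hAb : IsBounded A) (h : S.UGAS A) : S.RFC := by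
  obtain ⟨β, hβ, hφ⟩ := h
  obtain ⟨a, ha⟩ := hA
  intro C _ τ _
  refine (isBounded_setOf_dA_le ⟨a, ha⟩ hAb (β (C + ‖a‖₊) 0)).subset ?_
  rintro _ ⟨t, -, d, hd, x, hx, rfl⟩
  calc dA A (S.φ t x d) ≤ β (dA A x) t := hφ x d hd t
    _ ≤ β (C + ‖a‖₊) t :=
      hβ.monotone_left t ((dA_le_nnnorm_add ha x).trans (by gcongr; exact hx))
    _ ≤ β (C + ‖a‖₊) 0 := hβ.antitone_right _ zero_le

lemma UGAS.uls (h : S.UGAS A) : S.ULS A := by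
  obtain ⟨β, hβ, hφ⟩ := h
  intro ε hε
  obtain ⟨δ, hδ, hδε⟩ := (hβ.2.1 0).exists_pos_le hε
  exact ⟨δ, hδ, fun x hx d hd t => (hφ x d hd t).trans <|
    (hβ.monotone_left t hx).trans <| (hβ.antitone_right δ zero_le).trans hδε⟩

lemma UGAS.ugatt (h : S.UGAS A) : S.UGATT A := by
  obtain ⟨β, hβ, hφ⟩ := h
  intro ε hε r hr
  obtain ⟨τ, hτ⟩ := eventually_atTop.1 ((hβ.2.2 r hr).2.eventually_lt_const hε)
  exact ⟨τ, fun x hx d hd t ht => (hφ x d hd t).trans <| (hβ.monotone_left t hx).trans (hτ t ht).le⟩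

lemma ULS.invariant (hAc : IsClosed A) (h : S.ULS A) : S.Invariant A := by
  rintro _ ⟨t, d, hd, x, hx, rfl⟩
  refine mem_of_dA_eq_zero hAc ⟨x, hx⟩
    (le_antisymm (le_of_forall_pos_le_add fun ε hε => ?_) zero_le)
  obtain ⟨δ, -, hδ⟩ := h ε hε
  simpa using hδ x (by simp [dA_eq_zero_of_mem hx]) d hd t

lemma ULS.robustlyInvariant (hAc : IsClosed A) (h : S.ULS A) : S.RobustlyInvariant A :=
  ⟨h.invariant hAc, fun ε hε _ _ => by
    obtain ⟨δ, hδ, hφ⟩ := h ε hε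
    exact ⟨δ, hδ, fun t _ x hx d hd => hφ x hx d hd t⟩⟩

lemma ULS.of_ugatt_of_robustlyInvariant (hatt : S.UGATT A) (hri : S.RobustlyInvariant A) :
    S.ULS A := by
  intro ε hε
  obtain ⟨τ, hτ⟩ := hatt ε hε 1 one_pos
  obtain ⟨δ, hδ, hφ⟩ := hri.2 ε hε (τ + 1) (by positivity)
  refine ⟨min δ 1, lt_min hδ one_pos, fun x hx d hd t => ?_⟩
  rcases le_or_gt t (τ + 1) with ht | ht
  · exact hφ t ht x (hx.trans (min_le_left _ _)) d hd
  · exact hτ x (hx.trans (min_le_right _ _)) d hd t (le_self_add.trans ht.le)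

lemma UGATT.ugwa (h : S.UGATT A) : S.UGWA A := fun ε hε r hr => by
  obtain ⟨τ, hτ⟩ := h ε hε r hr
  exact ⟨τ, fun x hx d hd => ⟨τ, le_rfl, hτ x hx d hd τ le_rfl⟩⟩

lemma UGATT.of_ugs_of_ugwa (hs : S.UGS A) (hwa : S.UGWA A) : S.UGATT A := by
  obtain ⟨σ, hσ, hφ⟩ := hs
  intro ε hε r hr
  obtain ⟨δ, hδ, hσδ⟩ := hσ.1.exists_pos_le hε
  obtain ⟨τ, hτ⟩ := hwa δ hδ r hr
  refine ⟨τ, fun x hx d hd t ht => ?_⟩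
  obtain ⟨s, hsτ, hs⟩ := hτ x hx d hd
  rw [S.φ_eq_φ_shift x hd (hsτ.trans ht)]
  exact (hφ _ _ (S.shift_invariant d hd s) _).trans ((hσ.1.2.1.monotone hs).trans hσδ)

lemma exists_dA_bound_of_rfc_of_uls_of_ugwa (hA : A.Nonempty) (hAb : IsBounded A)
    (hrfc : S.RFC) (huls : S.ULS A) (hwa : S.UGWA A) (R : ℝ≥0) :
    ∃ C : ℝ≥0, ∀ x, dA A x ≤ R → ∀ d ∈ S.Dist, ∀ t, dA A (S.φ t x d) ≤ C := by
  obtain ⟨a, ha⟩ := hA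
  obtain ⟨δ, hδ, hδ1⟩ := huls 1 one_pos
  obtain ⟨τ, hτ⟩ := hwa δ hδ (R + 1) (by positivity)
  obtain ⟨ρ, hρ, hball⟩ := (isBounded_setOf_dA_le ⟨a, ha⟩ hAb R).exists_pos_norm_le
  obtain ⟨K, hK⟩ := isBounded_iff_forall_norm_le.1
    (hrfc ρ.toNNReal (by simpa using hρ) (τ + 1) (by positivity))
  -- before time `τ` the trajectory stays in a bounded reachable set; by time `τ` it has come
  -- `δ`-close to `A`, and from there on local stability keeps it `1`-close
  refine ⟨max (K.toNNReal + ‖a‖₊) 1, fun x hx d hd t => ?_⟩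
  rcases le_or_gt t τ with ht | ht
  · have hreach : S.φ t x d ∈ S.RT (τ + 1) {y : X | ‖y‖₊ ≤ ρ.toNNReal} :=
      ⟨t, ht.trans le_self_add, d, hd, x, by
        show ‖x‖₊ ≤ _
        rw [← NNReal.coe_le_coe, coe_nnnorm]
        exact (hball x hx).trans (Real.le_coe_toNNReal ρ), rfl⟩
    have hnorm : ‖S.φ t x d‖₊ ≤ K.toNNReal := by
      rw [← NNReal.coe_le_coe, coe_nnnorm]
      exact (hK _ hreach).trans (Real.le_coe_toNNReal K)
    exact (dA_le_nnnorm_add ha _).trans (le_max_of_le_left (by gcongr))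
  · obtain ⟨s, hsτ, hs⟩ := hτ x (hx.trans le_self_add) d hd
    rw [S.φ_eq_φ_shift x hd (hsτ.trans ht.le)]
    exact (hδ1 _ hs _ (S.shift_invariant d hd s) _).trans (le_max_right _ _)

lemma UGS.of_rfc_of_uls_of_ugwa (hA : A.Nonempty) (hAb : IsBounded A) (hrfc : S.RFC)
    (huls : S.ULS A) (hwa : S.UGWA A) : S.UGS A := by
  obtain ⟨σ, hσ, hφ⟩ := exists_classKinf_majorant (ι := X × S.Dist × ℝ≥0)
    (fun p => dA A p.1) (fun p => dA A (S.φ p.2.2 p.1 p.2.1))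
    (fun ε hε => by
      obtain ⟨δ, hδ, hφ⟩ := huls ε hε
      exact ⟨δ, hδ, fun p hp => hφ p.1 hp p.2.1 p.2.1.2 p.2.2⟩)
    (fun R => by
      obtain ⟨C, hC⟩ := exists_dA_bound_of_rfc_of_uls_of_ugwa hA hAb hrfc huls hwa R
      exact ⟨C, fun p hp => hC p.1 hp p.2.1 p.2.1.2 p.2.2⟩)
  exact ⟨σ, hσ, fun x d hd t => hφ (x, ⟨d, hd⟩, t)⟩

lemma UGAS.of_ugs_of_ugatt (hs : S.UGS A) (hatt : S.UGATT A) : S.UGAS A := by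
  obtain ⟨σ, hσ, hσφ⟩ := hs
  obtain ⟨β, hβ, hφ⟩ := exists_classKL_majorant (ι := X × S.Dist × ℝ≥0)
    (fun p => dA A p.1) (fun p => p.2.2) (fun p => dA A (S.φ p.2.2 p.1 p.2.1)) hσ.1
    (fun p => hσφ p.1 p.2.1 p.2.1.2 p.2.2)
    (fun ε hε R hR => by
      obtain ⟨τ, hτ⟩ := hatt ε hε R hR
      exact ⟨τ, fun p hp ht => hτ p.1 hp p.2.1 p.2.1.2 p.2.2 ht⟩)
  exact ⟨β, hβ, fun x d hd t => hφ (x, ⟨d, hd⟩, t)⟩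

end System

/-- characterizations of UGAS. -/
theorem stmt18 {X : Type*} [NormedAddCommGroup X] [NormedSpace ℝ X]
    {W : Type*} [NormedAddCommGroup W] [NormedSpace ℝ W] (S : System X W) (A : Set X) (hA : A.Nonempty) (hAb : IsBounded A)
    (hAc : IsClosed A) :
    [ S.UGAS A,
      S.RFC ∧ S.UGATT A ∧ S.RobustlyInvariant A,
      S.RFC ∧ S.ULS A ∧ S.UGWA A,
      S.UGS A ∧ S.UGWA A,
      S.UGS A ∧ S.UGATT A ].TFAE := by
  tfae_have 1 → 2 := fun h => ⟨h.rfc hA hAb, h.ugatt, h.uls.robustlyInvariant hAc⟩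
  tfae_have 2 → 3 := fun ⟨hrfc, hatt, hri⟩ =>
    ⟨hrfc, .of_ugatt_of_robustlyInvariant hatt hri, hatt.ugwa⟩
  tfae_have 3 → 4 := fun ⟨hrfc, huls, hwa⟩ => ⟨.of_rfc_of_uls_of_ugwa hA hAb hrfc huls hwa, hwa⟩
  tfae_have 4 → 5 := fun ⟨hs, hwa⟩ => ⟨hs, .of_ugs_of_ugwa hs hwa⟩
  tfae_have 5 → 1 := fun ⟨hs, hatt⟩ => .of_ugs_of_ugatt hs hatt
  tfae_finish
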